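/- Let m, S be positive natural numbers and let 𝒮 ⊆ (ℝ^S)^{m×m} be the set of arrays E with each entry E_{i,j} lying in the standard simplex Δ^{S−1} ⊆ ℝ^S and satisfying E_{i,j} = E_{j,i} for all i, j. Then for any Ẽ ∈ (ℝ^S)^{m×m}, the minimizer Ê of ‖E − Ẽ‖² = Σ_{i,j} ‖E_{i,j} − Ẽ_{i,j}‖² over 𝒮 exists, is unique, and satisfies Ê_{i,j} = Ê_{j,i} = P_{Δ^{S−1}}((Ẽ_{i,j} + Ẽ_{j,i})/2) for every pair (i,j), where P_{Δ^{S−1}} is the metric projection onto the simplex. -/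

import Mathlib

/-!
For symmetric `E`, reindexing `(i, j) ↦ (j, i)` shows that the objective is half of
`∑ (‖E_{ij} - Ẽ_{ij}‖² + ‖E_{ij} - Ẽ_{ji}‖²)`, and Apollonius' identity rewrites each summand as
`2 ‖E_{ij} - M_{ij}‖²` plus a term independent of `E`, where `M_{ij}` is the midpoint of `Ẽ_{ij}`
and `Ẽ_{ji}`. So over symmetric arrays the objective differs by a constant from
`∑ ‖E_{ij} - M_{ij}‖²`, which decouples entrywise and is minimized exactly by projecting each
`M_{ij}` onto the simplex; as `M` is symmetric, so is the array of projections.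
-/

/-- The standard simplex `Δ^{k-1}` viewed inside the Euclidean space `ℝ^k`. -/
def euclSimplex (k : ℕ) : Set (EuclideanSpace ℝ (Fin k)) :=
  {a | (∀ i, 0 ≤ a i) ∧ ∑ i, a i = 1}

/-- `p` is a metric projection of `x` onto `C`: `p` belongs to `C` and is
closest to `x` among all points of `C` (Euclidean norm). -/
def IsMetricProjOn {E : Type*} [NormedAddCommGroup E] (C : Set E) (x p : E) : Prop :=
  p ∈ C ∧ ∀ q ∈ C, ‖x - p‖ ≤ ‖x - q‖

/-- The set `𝒮` of symmetric arrays `E ∈ (ℝ^S)^{m×m}` whose entries lie in the simplex. -/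
def SymSimplexArrays (m S : ℕ) : Set (Fin m → Fin m → EuclideanSpace ℝ (Fin S)) :=
  {E | (∀ i j, E i j ∈ euclSimplex S) ∧ ∀ i j, E i j = E j i}

open EuclideanGeometry

section

variable {F : Type*} [NormedAddCommGroup F] {K : Set F}

theorem IsMetricProjOn.norm_sub_sq_le {x p q : F} (hp : IsMetricProjOn K x p) (hq : q ∈ K) :
    ‖p - x‖ ^ 2 ≤ ‖q - x‖ ^ 2 := by
  rw [norm_sub_rev p, norm_sub_rev q]
  exact pow_le_pow_left₀ (norm_nonneg _) (hp.2 q hq) 2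

variable {κ : Type*} [Fintype κ] {X P E : κ → F}

theorem sum_norm_sub_sq_le_of_isMetricProjOn (hP : ∀ k, IsMetricProjOn K (X k) (P k))
    (hE : ∀ k, E k ∈ K) : ∑ k, ‖P k - X k‖ ^ 2 ≤ ∑ k, ‖E k - X k‖ ^ 2 :=
  Finset.sum_le_sum fun k _ => (hP k).norm_sub_sq_le (hE k)

theorem isMetricProjOn_of_sum_norm_sub_sq_le (hP : ∀ k, IsMetricProjOn K (X k) (P k))
    (hE : ∀ k, E k ∈ K) (hle : ∑ k, ‖E k - X k‖ ^ 2 ≤ ∑ k, ‖P k - X k‖ ^ 2) (k : κ) :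
    IsMetricProjOn K (X k) (E k) := by
  have hterm : ∀ k ∈ Finset.univ, ‖P k - X k‖ ^ 2 ≤ ‖E k - X k‖ ^ 2 :=
    fun k _ => (hP k).norm_sub_sq_le (hE k)
  have hsq := (Finset.sum_eq_sum_iff_of_le hterm).1
    (le_antisymm (Finset.sum_le_sum hterm) hle) k (Finset.mem_univ k)
  have hnorm : ‖X k - E k‖ = ‖X k - P k‖ := by
    rw [norm_sub_rev (X k), norm_sub_rev (X k)]
    exact ((pow_left_inj₀ (norm_nonneg _) (norm_nonneg _) two_ne_zero).1 hsq).symm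
  exact ⟨hE k, fun q hq => hnorm ▸ (hP k).2 q hq⟩

end

section

variable {F : Type*} [NormedAddCommGroup F] [InnerProductSpace ℝ F]

theorem IsMetricProjOn.unique {K : Set F} (hK : Convex ℝ K) {x p q : F}
    (hp : IsMetricProjOn K x p) (hq : IsMetricProjOn K x q) : p = q := by
  have hmid := hK.midpoint_mem hp.1 hq.1
  -- By Apollonius, the midpoint of `p` and `q` would be strictly nearer to `x` unless `p = q`.
  have apollonius := dist_sq_add_dist_sq_eq_two_mul_dist_midpoint_sq_add_half_dist_sq x p q
  simp only [dist_eq_norm] at apollonius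
  have hpm := pow_le_pow_left₀ (norm_nonneg _) (hp.2 _ hmid) 2
  have hqm := pow_le_pow_left₀ (norm_nonneg _) (hq.2 _ hmid) 2
  have : ‖p - q‖ / 2 = 0 := by nlinarith
  simpa [sub_eq_zero] using this

theorem exists_isMetricProjOn {K : Set F} (hne : K.Nonempty) (hc : IsComplete K)
    (hK : Convex ℝ K) (x : F) : ∃ p, IsMetricProjOn K x p := by
  obtain ⟨p, hp, hpx⟩ := exists_norm_eq_iInf_of_complete_convex hne hc hK x
  have hbdd : BddBelow (Set.range fun w : K => ‖x - w‖) :=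
    ⟨0, Set.forall_mem_range.2 fun _ => norm_nonneg _⟩
  exact ⟨p, hp, fun q hq => hpx ▸ ciInf_le hbdd ⟨q, hq⟩⟩

variable {ι : Type*} [Fintype ι]

theorem sum_sum_norm_sub_sq_eq_of_symm {E : ι → ι → F} (hE : ∀ i j, E i j = E j i)
    (A : ι → ι → F) :
    ∑ i, ∑ j, ‖E i j - A i j‖ ^ 2 =
      ∑ i, ∑ j, (‖E i j - midpoint ℝ (A i j) (A j i)‖ ^ 2 + (‖A i j - A j i‖ / 2) ^ 2) := by
  have htranspose : ∑ i, ∑ j, ‖E i j - A j i‖ ^ 2 = ∑ i, ∑ j, ‖E i j - A i j‖ ^ 2 := by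
    rw [Finset.sum_comm]
    simp only [hE]
  have hsum : ∑ i, ∑ j, (‖E i j - A i j‖ ^ 2 + ‖E i j - A j i‖ ^ 2) =
      ∑ i, ∑ j, 2 * (‖E i j - midpoint ℝ (A i j) (A j i)‖ ^ 2 + (‖A i j - A j i‖ / 2) ^ 2) := by
    refine Finset.sum_congr rfl fun i _ => Finset.sum_congr rfl fun j _ => ?_
    simpa only [dist_eq_norm] using
      dist_sq_add_dist_sq_eq_two_mul_dist_midpoint_sq_add_half_dist_sq (E i j) (A i j) (A j i)
  simp only [Finset.sum_add_distrib, ← Finset.mul_sum, htranspose] at hsum ⊢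
  linarith

theorem sum_sum_norm_sub_sq_le_iff_of_symm {E E' : ι → ι → F} (hE : ∀ i j, E i j = E j i)
    (hE' : ∀ i j, E' i j = E' j i) (A : ι → ι → F) :
    ∑ i, ∑ j, ‖E i j - A i j‖ ^ 2 ≤ ∑ i, ∑ j, ‖E' i j - A i j‖ ^ 2 ↔
      ∑ p : ι × ι, ‖E p.1 p.2 - midpoint ℝ (A p.1 p.2) (A p.2 p.1)‖ ^ 2 ≤
        ∑ p : ι × ι, ‖E' p.1 p.2 - midpoint ℝ (A p.1 p.2) (A p.2 p.1)‖ ^ 2 := by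
  rw [sum_sum_norm_sub_sq_eq_of_symm hE, sum_sum_norm_sub_sq_eq_of_symm hE']
  simp only [Fintype.sum_prod_type, Finset.sum_add_distrib, add_le_add_iff_right]

end

theorem euclSimplex_eq_preimage (k : ℕ) :
    euclSimplex k = WithLp.ofLp ⁻¹' stdSimplex ℝ (Fin k) :=
  rfl

theorem convex_euclSimplex (k : ℕ) : Convex ℝ (euclSimplex k) := by
  rw [euclSimplex_eq_preimage]
  exact (convex_stdSimplex ℝ (Fin k)).linear_preimage
    (WithLp.linearEquiv 2 ℝ (Fin k → ℝ)).toLinearMap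

theorem isClosed_euclSimplex (k : ℕ) : IsClosed (euclSimplex k) := by
  rw [euclSimplex_eq_preimage]
  exact (isClosed_stdSimplex ℝ (Fin k)).preimage (PiLp.continuous_ofLp 2 _)

theorem euclSimplex_nonempty {k : ℕ} (hk : 0 < k) : (euclSimplex k).Nonempty := by
  rw [euclSimplex_eq_preimage]
  exact ⟨WithLp.toLp 2 (Pi.single ⟨0, hk⟩ 1), single_mem_stdSimplex ℝ _⟩

theorem stmt_3_general (m S : ℕ) (hS : 0 < S)
    (Et : Fin m → Fin m → EuclideanSpace ℝ (Fin S)) :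
    (∃! E, E ∈ SymSimplexArrays m S ∧
        ∀ E' ∈ SymSimplexArrays m S,
          ∑ i, ∑ j, ‖E i j - Et i j‖ ^ 2 ≤ ∑ i, ∑ j, ‖E' i j - Et i j‖ ^ 2) ∧
    ∀ E, (E ∈ SymSimplexArrays m S ∧
        ∀ E' ∈ SymSimplexArrays m S,
          ∑ i, ∑ j, ‖E i j - Et i j‖ ^ 2 ≤ ∑ i, ∑ j, ‖E' i j - Et i j‖ ^ 2) →
      ∀ i j, E i j = E j i ∧
        IsMetricProjOn (euclSimplex S) (midpoint ℝ (Et i j) (Et j i)) (E i j) := by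
  choose P hP using exists_isMetricProjOn (euclSimplex_nonempty hS)
    (isClosed_euclSimplex S).isComplete (convex_euclSimplex S)
  let M := fun i j => midpoint ℝ (Et i j) (Et j i)
  let Ehat := fun i j => P (M i j)
  have hEhat_proj : ∀ p : Fin m × Fin m,
      IsMetricProjOn (euclSimplex S) (M p.1 p.2) (Ehat p.1 p.2) := fun _ => hP _
  have hEhat : Ehat ∈ SymSimplexArrays m S :=
    ⟨fun i j => (hP _).1, fun i j => by simp only [Ehat, M, midpoint_comm]⟩
  have hEhat_min : ∀ E' ∈ SymSimplexArrays m S,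
      ∑ i, ∑ j, ‖Ehat i j - Et i j‖ ^ 2 ≤ ∑ i, ∑ j, ‖E' i j - Et i j‖ ^ 2 := fun E' hE' =>
    (sum_sum_norm_sub_sq_le_iff_of_symm hEhat.2 hE'.2 Et).2 <|
      sum_norm_sub_sq_le_of_isMetricProjOn hEhat_proj fun p => hE'.1 p.1 p.2
  have hproj : ∀ E, (E ∈ SymSimplexArrays m S ∧
      ∀ E' ∈ SymSimplexArrays m S,
        ∑ i, ∑ j, ‖E i j - Et i j‖ ^ 2 ≤ ∑ i, ∑ j, ‖E' i j - Et i j‖ ^ 2) →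
      ∀ i j, IsMetricProjOn (euclSimplex S) (M i j) (E i j) := fun E hE i j =>
    isMetricProjOn_of_sum_norm_sub_sq_le hEhat_proj (fun p => hE.1.1 p.1 p.2)
      ((sum_sum_norm_sub_sq_le_iff_of_symm hE.1.2 hEhat.2 Et).1 (hE.2 Ehat hEhat)) (i, j)
  refine ⟨⟨Ehat, ⟨hEhat, hEhat_min⟩, fun E hE => ?_⟩,
    fun E hE i j => ⟨hE.1.2 i j, hproj E hE i j⟩⟩
  funext i j
  exact (hproj E hE i j).unique (convex_euclSimplex S) (hP _)

/-- For any `Ẽ ∈ (ℝ^S)^{m×m}`, the minimizer `Ê` of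
`∑_{i,j} ‖E_{i,j} − Ẽ_{i,j}‖²` over the symmetric simplex-valued arrays `𝒮` exists,
is unique, and satisfies `Ê_{i,j} = Ê_{j,i} = P_{Δ^{S−1}}((Ẽ_{i,j} + Ẽ_{j,i})/2)`. -/
theorem stmt_3 (m S : ℕ) (hm : 0 < m) (hS : 0 < S)
    (Et : Fin m → Fin m → EuclideanSpace ℝ (Fin S)) :
    (∃! E, E ∈ SymSimplexArrays m S ∧
        ∀ E' ∈ SymSimplexArrays m S,
          ∑ i, ∑ j, ‖E i j - Et i j‖ ^ 2 ≤ ∑ i, ∑ j, ‖E' i j - Et i j‖ ^ 2) ∧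
    ∀ E, (E ∈ SymSimplexArrays m S ∧
        ∀ E' ∈ SymSimplexArrays m S,
          ∑ i, ∑ j, ‖E i j - Et i j‖ ^ 2 ≤ ∑ i, ∑ j, ‖E' i j - Et i j‖ ^ 2) →
      ∀ i j, E i j = E j i ∧
        IsMetricProjOn (euclSimplex S) (midpoint ℝ (Et i j) (Et j i)) (E i j) :=
  stmt_3_general m S hS Et
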